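/- arXiv:0709.0600 — 2 statements merged into one kernel-verified Lean document; each statement's English description precedes it below -/
import Mathlib

section
/- If M is a subspace of bounded operators B(H₁,H₂) satisfying M M* M ⊆ M, then the linear span of M M* is a *-subalgebra of B(H₂). -/
open ContinuousLinearMap

theorem stmt1
    {H₁ H₂ : Type*}
    [NormedAddCommGroup H₁] [InnerProductSpace ℂ H₁] [CompleteSpace H₁]
    [NormedAddCommGroup H₂] [InnerProductSpace ℂ H₂] [CompleteSpace H₂]
    (M : Submodule ℂ (H₁ →L[ℂ] H₂))
    (hTRO : ∀ S ∈ M, ∀ T ∈ M, ∀ R ∈ M, S ∘L (adjoint T) ∘L R ∈ M) :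
    (∀ X ∈ Submodule.span ℂ {X : H₂ →L[ℂ] H₂ | ∃ S ∈ M, ∃ T ∈ M, X = S ∘L (adjoint T)},
      ∀ Y ∈ Submodule.span ℂ {X : H₂ →L[ℂ] H₂ | ∃ S ∈ M, ∃ T ∈ M, X = S ∘L (adjoint T)},
        X ∘L Y ∈ Submodule.span ℂ {X : H₂ →L[ℂ] H₂ | ∃ S ∈ M, ∃ T ∈ M, X = S ∘L (adjoint T)}) ∧
    (∀ X ∈ Submodule.span ℂ {X : H₂ →L[ℂ] H₂ | ∃ S ∈ M, ∃ T ∈ M, X = S ∘L (adjoint T)},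
        adjoint X ∈ Submodule.span ℂ {X : H₂ →L[ℂ] H₂ | ∃ S ∈ M, ∃ T ∈ M, X = S ∘L (adjoint T)}) := by
  set s : Set (H₂ →L[ℂ] H₂) := {X : H₂ →L[ℂ] H₂ | ∃ S ∈ M, ∃ T ∈ M, X = S ∘L (adjoint T)}
  constructor
  · intro X hX Y hY
    induction hX using Submodule.span_induction with
    | mem X hX =>
      induction hY using Submodule.span_induction with
      | mem Y hY =>
        obtain ⟨S, hS, T, hT, rfl⟩ := hX
        obtain ⟨S', hS', T', hT', rfl⟩ := hY
        apply Submodule.subset_span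
        refine ⟨S ∘L (adjoint T) ∘L S', hTRO S hS T hT S' hS', T', hT', ?_⟩
        ext x; simp
      | zero => simpa using Submodule.zero_mem _
      | add Y Z _ _ hY hZ => simpa [comp_add] using Submodule.add_mem _ hY hZ
      | smul c Y _ hY => simpa [comp_smulₛₗ] using Submodule.smul_mem _ c hY
    | zero => simpa using Submodule.zero_mem _
    | add X Z _ _ h1 h2 => simpa [add_comp] using Submodule.add_mem _ h1 h2
    | smul c X _ h => simpa [smul_comp] using Submodule.smul_mem _ c h
  · intro X hX
    induction hX using Submodule.span_induction with
    | mem X hX =>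
      obtain ⟨S, hS, T, hT, rfl⟩ := hX
      apply Submodule.subset_span
      exact ⟨T, hT, S, hS, by rw [adjoint_comp, adjoint_adjoint]⟩
    | zero => simpa using Submodule.zero_mem _
    | add X Y _ _ h1 h2 => simpa [map_add] using Submodule.add_mem _ h1 h2
    | smul c X _ h =>
      have : adjoint (c • X) = (starRingEnd ℂ c) • adjoint X := by
        exact map_smulₛₗ (adjoint : (H₂ →L[ℂ] H₂) ≃ₗᵢ⋆[ℂ] (H₂ →L[ℂ] H₂)).toLinearEquiv c X
      rw [this]
      exact Submodule.smul_mem _ _ h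
end

section
/- If A ⊆ B(H) is a von Neumann algebra, then its infinite amplification A^∞ = {A^∞ : A ∈ A} ⊆ B(H^∞) is reflexive: A^∞ = Alg(Lat(A^∞)). -/
/-!
A projection is invariant under `𝒜^∞` as soon as its range is, so every operator `T` in
`Alg(Lat(𝒜^∞))` preserves each closed subspace `{x | x j = V (x i)}` with `V ∈ 𝒜'`. Taking
`V = 0` shows that `T` acts coordinatewise through its diagonal blocks `B n`; taking `V = 1`
shows that all blocks coincide, and a general `V ∈ 𝒜'` shows that the common block commutes
with `𝒜'`. Hence `T = B^∞` with `B ∈ 𝒜'' = 𝒜`.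
-/

open ContinuousLinearMap

noncomputable section

/-- The lattice of invariant projections of a set of operators. -/
def latSet {E : Type*} [NormedAddCommGroup E] [InnerProductSpace ℂ E] [CompleteSpace E]
    (𝒜 : Set (E →L[ℂ] E)) : Set (E →L[ℂ] E) :=
  {L | IsSelfAdjoint L ∧ IsIdempotentElem L ∧ ∀ A ∈ 𝒜, (1 - L) ∘L A ∘L L = 0}

/-- The algebra of operators leaving invariant each projection in a set. -/
def algSet {E : Type*} [NormedAddCommGroup E] [InnerProductSpace ℂ E] [CompleteSpace E]
    (𝓛 : Set (E →L[ℂ] E)) : Set (E →L[ℂ] E) :=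
  {A | ∀ L ∈ 𝓛, (1 - L) ∘L A ∘L L = 0}

section LatAlg

variable {E : Type*} [NormedAddCommGroup E] [InnerProductSpace ℂ E] [CompleteSpace E]

lemma subset_algSet_latSet (𝒮 : Set (E →L[ℂ] E)) : 𝒮 ⊆ algSet (latSet 𝒮) :=
  fun _ hS _ hL => hL.2.2 _ hS

lemma starProjection_mem_latSet {𝒮 : Set (E →L[ℂ] E)} (K : Submodule ℂ E)
    [K.HasOrthogonalProjection] (hK : ∀ S ∈ 𝒮, ∀ x ∈ K, S x ∈ K) :
    K.starProjection ∈ latSet 𝒮 := by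
  refine ⟨isSelfAdjoint_starProjection K, K.isIdempotentElem_starProjection, fun S hS => ?_⟩
  ext x
  have hSx : S (K.starProjection x) ∈ K := hK S hS _ (K.starProjection_apply_mem x)
  simp [K.starProjection_eq_self_iff.mpr hSx]

lemma apply_mem_of_mem_algSet_latSet {𝒮 : Set (E →L[ℂ] E)} {T : E →L[ℂ] E}
    (hT : T ∈ algSet (latSet 𝒮)) (K : Submodule ℂ E) [K.HasOrthogonalProjection]
    (hK : ∀ S ∈ 𝒮, ∀ x ∈ K, S x ∈ K) {x : E} (hx : x ∈ K) : T x ∈ K := by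
  have h := congrArg (· x) (hT _ (starProjection_mem_latSet K hK))
  simp only [comp_apply, sub_apply, one_apply_eq_self, zero_apply, sub_eq_zero,
    K.starProjection_eq_self_iff.mpr hx] at h
  exact h ▸ K.starProjection_apply_mem (T x)

end LatAlg

section Amplification

open scoped lp

variable {H : Type*} [NormedAddCommGroup H] [InnerProductSpace ℂ H] [CompleteSpace H]

def infAmplification (𝒜 : Set (H →L[ℂ] H)) : Set (ℓ²(ℕ, H) →L[ℂ] ℓ²(ℕ, H)) :=
  {T | ∃ A ∈ 𝒜, ∀ (x : ℓ²(ℕ, H)) (n : ℕ), T x n = A (x n)}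

def diagBlock (T : ℓ²(ℕ, H) →L[ℂ] ℓ²(ℕ, H)) (n : ℕ) : H →L[ℂ] H :=
  lp.evalCLM ℂ (fun _ : ℕ => H) 2 n ∘L T ∘L lp.singleContinuousLinearMap ℂ (fun _ : ℕ => H) 2 n

variable {𝒜 : Set (H →L[ℂ] H)} {T : ℓ²(ℕ, H) →L[ℂ] ℓ²(ℕ, H)}

lemma apply_eq_of_mem_algSet_latSet_infAmplification
    (hT : T ∈ algSet (latSet (infAmplification 𝒜))) {V : H →L[ℂ] H}
    (hV : V ∈ Set.centralizer 𝒜) (i j : ℕ) {x : ℓ²(ℕ, H)} (hx : x j = V (x i)) :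
    T x j = V (T x i) := by
  let K := (lp.evalCLM ℂ (fun _ : ℕ => H) 2 j).toLinearMap.eqLocus
    (V ∘L lp.evalCLM ℂ (fun _ : ℕ => H) 2 i).toLinearMap
  refine apply_mem_of_mem_algSet_latSet hT K ?_ hx
  rintro S ⟨A, hA, hS⟩ y (hy : y j = V (y i))
  change S y j = V (S y i)
  rw [hS, hS, hy]
  exact DFunLike.congr_fun (hV A hA) (y i)

lemma apply_eq_diagBlock_apply (hT : T ∈ algSet (latSet (infAmplification 𝒜)))
    (x : ℓ²(ℕ, H)) (n : ℕ) : T x n = diagBlock T n (x n) := by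
  -- `V = 0`: the coordinate hyperplane `{y | y n = 0}` is invariant under `T`.
  have h := apply_eq_of_mem_algSet_latSet_infAmplification hT Set.zero_mem_centralizer n n
    (x := x - lp.single 2 n (x n)) (by simp)
  simp only [map_sub, lp.coeFn_sub, Pi.sub_apply, zero_apply, sub_zero, sub_eq_zero] at h
  exact h

lemma diagBlock_mul_eq_mul_diagBlock (hT : T ∈ algSet (latSet (infAmplification 𝒜)))
    {V : H →L[ℂ] H} (hV : V ∈ Set.centralizer 𝒜) {i j : ℕ} (hij : i ≠ j) :
    diagBlock T j * V = V * diagBlock T i := by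
  ext a
  have h := apply_eq_of_mem_algSet_latSet_infAmplification hT hV i j
    (x := lp.single 2 i a + lp.single 2 j (V a))
    (by simp [hij, hij.symm])
  simpa [apply_eq_diagBlock_apply hT, Pi.single_apply, hij, hij.symm] using h

lemma diagBlock_eq_diagBlock_zero (hT : T ∈ algSet (latSet (infAmplification 𝒜))) (n : ℕ) :
    diagBlock T n = diagBlock T 0 := by
  rcases eq_or_ne n 0 with rfl | hn
  · rfl
  · simpa using diagBlock_mul_eq_mul_diagBlock hT Set.one_mem_centralizer hn.symm

lemma diagBlock_zero_mem_centralizer_centralizer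
    (hT : T ∈ algSet (latSet (infAmplification 𝒜))) :
    diagBlock T 0 ∈ Set.centralizer (Set.centralizer 𝒜) := fun V hV => by
  rw [← diagBlock_eq_diagBlock_zero hT 1,
    diagBlock_mul_eq_mul_diagBlock hT hV one_ne_zero.symm, diagBlock_eq_diagBlock_zero hT 1]

lemma algSet_latSet_infAmplification_subset (𝒜 : Set (H →L[ℂ] H)) :
    algSet (latSet (infAmplification 𝒜)) ⊆
      infAmplification (Set.centralizer (Set.centralizer 𝒜)) := fun T hT =>
  ⟨diagBlock T 0, diagBlock_zero_mem_centralizer_centralizer hT, fun x n => by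
    rw [apply_eq_diagBlock_apply hT, diagBlock_eq_diagBlock_zero hT]⟩

end Amplification

theorem stmt18
    {H : Type*} [NormedAddCommGroup H] [InnerProductSpace ℂ H] [CompleteSpace H]
    (𝒜 : VonNeumannAlgebra H)
    (𝒜inf : Set (lp (fun _ : ℕ => H) 2 →L[ℂ] lp (fun _ : ℕ => H) 2))
    (hinf : 𝒜inf = {T | ∃ A ∈ 𝒜, ∀ (x : lp (fun _ : ℕ => H) 2) (n : ℕ),
      (T x : ∀ _ : ℕ, H) n = A ((x : ∀ _ : ℕ, H) n)}) :
    algSet (latSet 𝒜inf) = 𝒜inf := by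
  change 𝒜inf = infAmplification (𝒜 : Set (H →L[ℂ] H)) at hinf
  subst hinf
  refine (subset_algSet_latSet _).antisymm' ?_
  simpa only [𝒜.centralizer_centralizer] using algSet_latSet_infAmplification_subset (𝒜 : Set (H →L[ℂ] H))

end
end
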